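/- arXiv:1612.04316 — 2 statements merged into one kernel-verified Lean document; each statement's English description precedes it below -/
import Mathlib

section
/- Let n be a positive integer and let a and c be natural numbers with 2^(n-1) ≤ a < 2^n, c < 2^n, and c < a. Then the embedded inversion problem with n_b = n satisfiability bits has a solution in which every register fits its prescribed width: there exist natural numbers b < 2^n, b_f < 2^n, and r < a such that c·2^(2n) = a·(b·2^n + b_f) + r. -/
theorem Nat.mul_div_lt_of_lt {a c m : ℕ} (hca : c < a) (hm : 0 < m) : c * m / a < m :=
  Nat.div_lt_of_lt_mul (Nat.mul_lt_mul_of_pos_right hca hm)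

theorem Nat.exists_two_digit_quotient_of_lt {a c B : ℕ} (hca : c < a) (hB : 0 < B) :
    ∃ b < B, ∃ b_f < B, ∃ r < a, c * (B * B) = a * (b * B + b_f) + r := by
  set q := c * (B * B) / a
  have hq : q < B * B := Nat.mul_div_lt_of_lt hca (Nat.mul_pos hB hB)
  refine ⟨q / B, Nat.div_lt_of_lt_mul hq, q % B, Nat.mod_lt q hB,
    c * (B * B) % a, Nat.mod_lt _ (by omega), ?_⟩
  rw [Nat.div_add_mod' q B]
  exact (Nat.div_add_mod _ a).symm

theorem embedded_inversion_registers_fit_general (n a c : ℕ) (hca : c < a) :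
    ∃ b : ℕ, b < 2 ^ n ∧ ∃ b_f : ℕ, b_f < 2 ^ n ∧ ∃ r : ℕ, r < a ∧
      c * 2 ^ (2 * n) = a * (b * 2 ^ n + b_f) + r := by
  rw [two_mul, pow_add]
  exact Nat.exists_two_digit_quotient_of_lt hca (Nat.two_pow_pos n)

/-- If moreover `c < a`, the embedded inversion problem with `n_b = n`
has a solution in which every register fits its prescribed width. -/
theorem embedded_inversion_registers_fit (n a c : ℕ) (hn : 0 < n)
    (ha_lo : 2 ^ (n - 1) ≤ a) (ha_hi : a < 2 ^ n) (hc : c < 2 ^ n) (hca : c < a) :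
    ∃ b : ℕ, b < 2 ^ n ∧ ∃ b_f : ℕ, b_f < 2 ^ n ∧ ∃ r : ℕ, r < a ∧
      c * 2 ^ (2 * n) = a * (b * 2 ^ n + b_f) + r :=
  embedded_inversion_registers_fit_general n a c hca
end

section
/- Let a, c, n, n_a, n_b, and c_f be natural numbers, and suppose the padded embedded equation holds: a·2^(n_a)·b̂ = c·2^(n + n_a + n_b) + c_f for some natural number b̂. Then 2^(n_a) divides c_f, and consequently b̂ satisfies the unpadded equation a·b̂ = c·2^(n + n_b) + c_f/2^(n_a). Hence ⌊c·2^(n + n_a + n_b) / (a·2^(n_a))⌋ = ⌊c·2^(n + n_b) / a⌋ whenever a ≠ 0: padding a with n_a extra 'enhanced precision' zero bits does not change the solution register b̂. -/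
/-! Since `2 ^ (n + n_a + n_b) = 2 ^ (n + n_b) * 2 ^ n_a`, every term of the padded equation except
`c_f` is a multiple of `2 ^ n_a`; hence so is `c_f`, and cancelling `2 ^ n_a` gives back the
unpadded equation and the unpadded quotient. -/

namespace Nat

theorem dvd_of_mul_mul_eq_mul_add {a b d N r : ℕ} (h : a * d * b = N * d + r) : d ∣ r :=
  (Nat.dvd_add_right (dvd_mul_left d N)).mp (h ▸ ⟨a * b, by ring⟩)

theorem mul_eq_add_div_of_mul_mul_eq_mul_add {a b d N r : ℕ} (hd : 0 < d)
    (h : a * d * b = N * d + r) : a * b = N + r / d := by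
  obtain ⟨k, rfl⟩ := dvd_of_mul_mul_eq_mul_add h
  rw [Nat.mul_div_cancel_left k hd]
  exact Nat.eq_of_mul_eq_mul_right hd (by linarith)

end Nat

/-- Padding `a` with `n_a` extra zero bits forces the last `n_a` bits of `c_f`
to vanish and does not change the solution register. -/
theorem enhanced_precision_padding (a c n n_a n_b c_f : ℕ) (bhat : ℕ)
    (h : a * 2 ^ n_a * bhat = c * 2 ^ (n + n_a + n_b) + c_f) :
    2 ^ n_a ∣ c_f ∧
    a * bhat = c * 2 ^ (n + n_b) + c_f / 2 ^ n_a ∧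
    (a ≠ 0 → c * 2 ^ (n + n_a + n_b) / (a * 2 ^ n_a) = c * 2 ^ (n + n_b) / a) := by
  have hsplit : c * 2 ^ (n + n_a + n_b) = c * 2 ^ (n + n_b) * 2 ^ n_a := by ring
  rw [hsplit] at h ⊢
  exact ⟨Nat.dvd_of_mul_mul_eq_mul_add h,
    Nat.mul_eq_add_div_of_mul_mul_eq_mul_add (by positivity) h,
    fun _ => Nat.mul_div_mul_right _ _ (by positivity)⟩
end
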